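/- Simulation lemma (value difference under model mismatch): for two transition kernels T and T̃ on a finite MDP, any policy π, and reward bounded so that the value function under T̃ satisfies |V_{T̃}^π(s)| ≤ C for all s, the value difference satisfies |V_T^π - V_{T̃}^π| ≤ (2Cγ/(1-γ))·E_{(s,a)∼d_T^π}[TV(T(·|s,a), T̃(·|s,a))], where d_T^π is the normalized discounted state-action occupancy measure under T and π, and TV is total variation distance. -/

import Mathlib

open Finset

variable {S A : Type*}

/-- One step of the state-distribution evolution under kernel `T` and policy `π`. -/
noncomputable def stepDist [Fintype S] [Fintype A]
    (T : S → A → S → ℝ) (π : S → A → ℝ) (p : S → ℝ) : S → ℝ :=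
  fun s' => ∑ s, ∑ a, p s * π s a * T s a s'

/-- State distribution at time `t` starting from `μ0`. -/
noncomputable def stateDist [Fintype S] [Fintype A]
    (T : S → A → S → ℝ) (π : S → A → ℝ) (μ0 : S → ℝ) : ℕ → S → ℝ :=
  fun t => (stepDist T π)^[t] μ0

/-- Discounted value `V_T^π = E[∑ γ^t r]` with initial distribution `μ0`. -/
noncomputable def value [Fintype S] [Fintype A]
    (T : S → A → S → ℝ) (π : S → A → ℝ) (μ0 : S → ℝ) (r : S → A → ℝ) (γ : ℝ) : ℝ :=
  ∑' t : ℕ, γ ^ t * ∑ s, ∑ a, stateDist T π μ0 t s * π s a * r s a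

/-- Normalized discounted state-action occupancy measure. -/
noncomputable def occupancy [Fintype S] [Fintype A]
    (T : S → A → S → ℝ) (π : S → A → ℝ) (μ0 : S → ℝ) (γ : ℝ) : S → A → ℝ :=
  fun s a => (1 - γ) * ∑' t : ℕ, γ ^ t * stateDist T π μ0 t s * π s a

/-- Total variation distance between two distributions on a finite set. -/
noncomputable def tvDist [Fintype S] (P Q : S → ℝ) : ℝ :=
  (1 / 2) * ∑ s', |P s' - Q s'|

/-- Dirac initial distribution at `s`. -/
noncomputable def dirac [DecidableEq S] (s : S) : S → ℝ :=
  fun s' => if s' = s then 1 else 0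

/-!
Let `v s = V_{T̃}^π(s)`; it satisfies the Bellman equation
`v s = ∑ a, π s a * (r s a + γ * ∑ s', T̃ s a s' * v s')`. Along the state distributions `μ_t`
of `T`, this gives
`γ^t E_t[r] = γ^t ⟨μ_t, v⟩ - γ^(t+1) ⟨μ_(t+1), v⟩ + γ^(t+1) E_t[(T - T̃) v]`,
with `E_t` the expectation under `s ∼ μ_t`, `a ∼ π s`. Summing over `t` telescopes to
`V_T - V_{T̃} = γ ∑_t γ^t E_t[(T - T̃) v]`, and `|(T - T̃)(s, a) · v| ≤ 2 C TV(T(s, a), T̃(s, a))`.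
The discounted sum of the `E_t` is `1 / (1 - γ)` times the average against the occupancy measure.
-/

lemma dirac_nonneg [DecidableEq S] (s s' : S) : 0 ≤ dirac s s' := by
  unfold dirac
  split_ifs <;> norm_num

def policyExpect [Fintype S] [Fintype A] (π : S → A → ℝ) (p : S → ℝ) (f : S → A → ℝ) : ℝ :=
  ∑ s, ∑ a, p s * π s a * f s a

section Expectation

variable [Fintype S] [Fintype A] {π : S → A → ℝ} {p : S → ℝ}

lemma policyExpect_add (f g : S → A → ℝ) :
    policyExpect π p (fun s a => f s a + g s a) = policyExpect π p f + policyExpect π p g := by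
  simp only [policyExpect, mul_add, sum_add_distrib]

lemma policyExpect_sub (f g : S → A → ℝ) :
    policyExpect π p (fun s a => f s a - g s a) = policyExpect π p f - policyExpect π p g := by
  simp only [policyExpect, mul_sub, sum_sub_distrib]

lemma policyExpect_const_mul (c : ℝ) (f : S → A → ℝ) :
    policyExpect π p (fun s a => c * f s a) = c * policyExpect π p f := by
  simp only [policyExpect, mul_sum]
  exact sum_congr rfl fun s _ => sum_congr rfl fun a _ => by ring

lemma policyExpect_const (hπ1 : ∀ s, ∑ a, π s a = 1) (c : ℝ) :
    policyExpect π p (fun _ _ => c) = c * ∑ s, p s := by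
  rw [policyExpect, mul_sum]
  refine sum_congr rfl fun s _ => ?_
  rw [← sum_mul, ← mul_sum, hπ1]
  ring

lemma policyExpect_sum_smul {ι : Type*} [Fintype ι] (c : ι → ℝ) (q : ι → S → ℝ)
    (f : S → A → ℝ) :
    policyExpect π (∑ i, c i • q i) f = ∑ i, c i * policyExpect π (q i) f := by
  simp only [policyExpect, Finset.sum_apply, Pi.smul_apply, smul_eq_mul, sum_mul, mul_sum]
  refine (sum_congr rfl fun s _ => sum_comm).trans ?_
  rw [sum_comm]
  exact sum_congr rfl fun i _ => sum_congr rfl fun s _ => sum_congr rfl fun a _ => by ring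

lemma policyExpect_dirac [DecidableEq S] (s : S) (f : S → A → ℝ) :
    policyExpect π (dirac s) f = ∑ a, π s a * f s a := by
  simp [policyExpect, dirac]

lemma abs_policyExpect_le (hp : ∀ s, 0 ≤ p s) (hπ0 : ∀ s a, 0 ≤ π s a) {f g : S → A → ℝ}
    (hfg : ∀ s a, |f s a| ≤ g s a) : |policyExpect π p f| ≤ policyExpect π p g := by
  refine (abs_sum_le_sum_abs _ _).trans (sum_le_sum fun s _ => ?_)
  refine (abs_sum_le_sum_abs _ _).trans (sum_le_sum fun a _ => ?_)
  rw [abs_mul, abs_of_nonneg (mul_nonneg (hp s) (hπ0 s a))]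
  exact mul_le_mul_of_nonneg_left (hfg s a) (mul_nonneg (hp s) (hπ0 s a))

end Expectation

section Dynamics

variable [Fintype S] [Fintype A] {T : S → A → S → ℝ} {π : S → A → ℝ}

lemma sum_stepDist_mul (p v : S → ℝ) :
    ∑ s', stepDist T π p s' * v s' = policyExpect π p (fun s a => ∑ s', T s a s' * v s') := by
  simp only [stepDist, policyExpect, sum_mul, mul_sum]
  rw [sum_comm]
  refine sum_congr rfl fun s _ => ?_
  rw [sum_comm]
  exact sum_congr rfl fun a _ => sum_congr rfl fun s' _ => by ring

lemma stepDist_nonneg (hπ0 : ∀ s a, 0 ≤ π s a) (hT0 : ∀ s a s', 0 ≤ T s a s') {p : S → ℝ}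
    (hp : ∀ s, 0 ≤ p s) (s' : S) : 0 ≤ stepDist T π p s' :=
  sum_nonneg fun s _ => sum_nonneg fun a _ =>
    mul_nonneg (mul_nonneg (hp s) (hπ0 s a)) (hT0 s a s')

lemma sum_stepDist (hπ1 : ∀ s, ∑ a, π s a = 1) (hT1 : ∀ s a, ∑ s', T s a s' = 1) (p : S → ℝ) :
    ∑ s', stepDist T π p s' = ∑ s, p s := by
  have h := sum_stepDist_mul (T := T) (π := π) p (fun _ => 1)
  simp only [mul_one, hT1, policyExpect_const hπ1, one_mul] at h
  exact h

noncomputable def stepDistLinearMap (T : S → A → S → ℝ) (π : S → A → ℝ) : Module.End ℝ (S → ℝ) where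
  toFun := stepDist T π
  map_add' p q := by ext; simp only [stepDist, Pi.add_apply, add_mul, sum_add_distrib]
  map_smul' c p := by ext; simp only [stepDist, Pi.smul_apply, smul_eq_mul, mul_sum, mul_assoc,
    RingHom.id_apply]

lemma stateDist_eq_pow_apply (μ : S → ℝ) (t : ℕ) :
    stateDist T π μ t = (stepDistLinearMap T π ^ t) μ := by
  rw [Module.End.pow_apply]
  rfl

lemma stateDist_succ (μ : S → ℝ) (t : ℕ) :
    stateDist T π μ (t + 1) = stepDist T π (stateDist T π μ t) :=
  Function.iterate_succ_apply' _ _ _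

lemma stateDist_succ' (μ : S → ℝ) (t : ℕ) :
    stateDist T π μ (t + 1) = stateDist T π (stepDist T π μ) t :=
  Function.iterate_succ_apply _ _ _

lemma stateDist_nonneg (hπ0 : ∀ s a, 0 ≤ π s a) (hT0 : ∀ s a s', 0 ≤ T s a s') {μ : S → ℝ}
    (hμ : ∀ s, 0 ≤ μ s) (t : ℕ) (s : S) : 0 ≤ stateDist T π μ t s := by
  induction t generalizing s with
  | zero => exact hμ s
  | succ t ih => rw [stateDist_succ]; exact stepDist_nonneg hπ0 hT0 ih s

lemma sum_stateDist (hπ1 : ∀ s, ∑ a, π s a = 1) (hT1 : ∀ s a, ∑ s', T s a s' = 1)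
    (μ : S → ℝ) (t : ℕ) : ∑ s, stateDist T π μ t s = ∑ s, μ s := by
  induction t with
  | zero => rfl
  | succ t ih => rw [stateDist_succ, sum_stepDist hπ1 hT1, ih]

lemma stateDist_eq_sum_smul_dirac [DecidableEq S] (μ : S → ℝ) (t : ℕ) :
    stateDist T π μ t = ∑ s, μ s • stateDist T π (dirac s) t := by
  have hμ : μ = ∑ s, μ s • dirac s := by ext s'; simp [dirac]
  simp only [stateDist_eq_pow_apply]
  conv_lhs => rw [hμ]
  simp only [map_sum, map_smul]

end Dynamics

lemma summable_pow_mul_of_abs_le {γ M : ℝ} (hγ : |γ| < 1) {f : ℕ → ℝ} (hf : ∀ n, |f n| ≤ M) :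
    Summable fun n => γ ^ n * f n := by
  refine Summable.of_norm_bounded
    ((summable_geometric_of_lt_one (abs_nonneg γ) hγ).mul_right M) fun n => ?_
  rw [Real.norm_eq_abs, abs_mul, abs_pow]
  exact mul_le_mul_of_nonneg_left (hf n) (pow_nonneg (abs_nonneg γ) n)

lemma tsum_pow_mul_eq_of_telescoping {γ : ℝ} {a w d : ℕ → ℝ}
    (hw : Summable fun t => γ ^ t * w t) (hd : Summable fun t => γ ^ t * d t)
    (h : ∀ t, a t = w t - γ * w (t + 1) + γ * d t) :
    ∑' t, γ ^ t * a t = w 0 + γ * ∑' t, γ ^ t * d t := by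
  have hshift : HasSum (fun t => γ ^ (t + 1) * w (t + 1)) (∑' t, γ ^ t * w t - w 0) := by
    simpa using (hasSum_nat_add_iff' 1).mpr hw.hasSum
  have hsum := (hw.hasSum.sub hshift).add (hd.hasSum.mul_left γ)
  have hterm : (fun t => γ ^ t * a t) =
      fun t => γ ^ t * w t - γ ^ (t + 1) * w (t + 1) + γ * (γ ^ t * d t) :=
    funext fun t => by rw [h, pow_succ]; ring
  rw [hterm, hsum.tsum_eq]
  ring

section Value

variable [Fintype S] [Fintype A] {T : S → A → S → ℝ} {π : S → A → ℝ} {γ : ℝ}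

lemma summable_pow_mul_policyExpect_stateDist (hγ : |γ| < 1)
    (hπ0 : ∀ s a, 0 ≤ π s a) (hπ1 : ∀ s, ∑ a, π s a = 1)
    (hT0 : ∀ s a s', 0 ≤ T s a s') (hT1 : ∀ s a, ∑ s', T s a s' = 1)
    {μ : S → ℝ} (hμ : ∀ s, 0 ≤ μ s) (f : S → A → ℝ) :
    Summable fun t => γ ^ t * policyExpect π (stateDist T π μ t) f := by
  refine summable_pow_mul_of_abs_le hγ (M := (∑ s, ∑ a, |f s a|) * ∑ s, μ s) fun t => ?_
  have hf : ∀ s a, |f s a| ≤ ∑ s, ∑ a, |f s a| := fun s a =>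
    (single_le_sum (fun a _ => abs_nonneg (f s a)) (mem_univ a)).trans
      (single_le_sum (f := fun s => ∑ a, |f s a|)
        (fun s _ => sum_nonneg fun a _ => abs_nonneg _) (mem_univ s))
  calc |policyExpect π (stateDist T π μ t) f|
      ≤ policyExpect π (stateDist T π μ t) (fun _ _ => ∑ s, ∑ a, |f s a|) :=
        abs_policyExpect_le (stateDist_nonneg hπ0 hT0 hμ t) hπ0 hf
    _ = (∑ s, ∑ a, |f s a|) * ∑ s, μ s := by
        rw [policyExpect_const hπ1, sum_stateDist hπ1 hT1]

lemma value_eq_tsum_policyExpect (μ : S → ℝ) (r : S → A → ℝ) :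
    value T π μ r γ = ∑' t, γ ^ t * policyExpect π (stateDist T π μ t) r :=
  rfl

lemma value_eq_policyExpect_add_mul_value_stepDist {p : S → ℝ} (r : S → A → ℝ)
    (hsum : Summable fun t => γ ^ t * policyExpect π (stateDist T π p t) r) :
    value T π p r γ = policyExpect π p r + γ * value T π (stepDist T π p) r γ := by
  rw [value_eq_tsum_policyExpect, hsum.tsum_eq_zero_add, value_eq_tsum_policyExpect,
    ← tsum_mul_left]
  congr 1
  · rw [pow_zero, one_mul]
    rfl
  · refine tsum_congr fun t => ?_
    rw [stateDist_succ', pow_succ]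
    ring

lemma value_eq_sum_mul_value_dirac [DecidableEq S] (hγ : |γ| < 1)
    (hπ0 : ∀ s a, 0 ≤ π s a) (hπ1 : ∀ s, ∑ a, π s a = 1)
    (hT0 : ∀ s a s', 0 ≤ T s a s') (hT1 : ∀ s a, ∑ s', T s a s' = 1)
    (μ : S → ℝ) (r : S → A → ℝ) :
    value T π μ r γ = ∑ s, μ s * value T π (dirac s) r γ := by
  have hsum : ∀ s, Summable fun t => γ ^ t * policyExpect π (stateDist T π (dirac s) t) r :=
    fun s => summable_pow_mul_policyExpect_stateDist hγ hπ0 hπ1 hT0 hT1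
      (dirac_nonneg s) r
  simp only [value_eq_tsum_policyExpect, ← tsum_mul_left]
  rw [← Summable.tsum_finsetSum fun s _ => (hsum s).mul_left (μ s)]
  refine tsum_congr fun t => ?_
  rw [stateDist_eq_sum_smul_dirac, policyExpect_sum_smul, mul_sum]
  exact sum_congr rfl fun s _ => by ring

lemma value_dirac_eq_bellman [DecidableEq S] (hγ : |γ| < 1)
    (hπ0 : ∀ s a, 0 ≤ π s a) (hπ1 : ∀ s, ∑ a, π s a = 1)
    (hT0 : ∀ s a s', 0 ≤ T s a s') (hT1 : ∀ s a, ∑ s', T s a s' = 1) (r : S → A → ℝ) (s : S) :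
    value T π (dirac s) r γ =
      ∑ a, π s a * (r s a + γ * ∑ s', T s a s' * value T π (dirac s') r γ) := by
  rw [value_eq_policyExpect_add_mul_value_stepDist r
      (summable_pow_mul_policyExpect_stateDist hγ hπ0 hπ1 hT0 hT1 (dirac_nonneg s) r),
    value_eq_sum_mul_value_dirac hγ hπ0 hπ1 hT0 hT1, sum_stepDist_mul, ← policyExpect_const_mul,
    ← policyExpect_add, policyExpect_dirac]

theorem value_eq_sum_mul_add_tsum_of_bellman (hγ : |γ| < 1)
    (hπ0 : ∀ s a, 0 ≤ π s a) (hπ1 : ∀ s, ∑ a, π s a = 1)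
    (hT0 : ∀ s a s', 0 ≤ T s a s') (hT1 : ∀ s a, ∑ s', T s a s' = 1)
    {μ : S → ℝ} (hμ : ∀ s, 0 ≤ μ s) (r : S → A → ℝ) (T' : S → A → S → ℝ) (v : S → ℝ)
    (hv : ∀ s, v s = ∑ a, π s a * (r s a + γ * ∑ s', T' s a s' * v s')) :
    value T π μ r γ = ∑ s, μ s * v s + γ * ∑' t, γ ^ t *
      policyExpect π (stateDist T π μ t) (fun s a => ∑ s', (T s a s' - T' s a s') * v s') := by
  set u : ℕ → ℝ := fun t => ∑ s, stateDist T π μ t s * v s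
  have hu : ∀ t, u t = policyExpect π (stateDist T π μ t) r +
      γ * policyExpect π (stateDist T π μ t) (fun s a => ∑ s', T' s a s' * v s') := fun t => by
    rw [← policyExpect_const_mul, ← policyExpect_add]
    refine sum_congr rfl fun s _ => ?_
    rw [hv s, mul_sum]
    exact sum_congr rfl fun a _ => by ring
  have hu_succ : ∀ t, u (t + 1) =
      policyExpect π (stateDist T π μ t) (fun s a => ∑ s', T s a s' * v s') := fun t => by
    simp only [u, stateDist_succ, sum_stepDist_mul]
  have hu_summable : Summable fun t => γ ^ t * u t :=
    (summable_pow_mul_policyExpect_stateDist hγ hπ0 hπ1 hT0 hT1 hμ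
      (fun s a => r s a + γ * ∑ s', T' s a s' * v s')).congr
      fun t => by rw [hu, policyExpect_add, policyExpect_const_mul]
  rw [value_eq_tsum_policyExpect, tsum_pow_mul_eq_of_telescoping hu_summable
    (summable_pow_mul_policyExpect_stateDist hγ hπ0 hπ1 hT0 hT1 hμ _) fun t => ?_]
  · rfl
  simp only [sub_mul, sum_sub_distrib]
  rw [policyExpect_sub, hu, hu_succ]
  ring

lemma sum_occupancy_mul (hγ : |γ| < 1)
    (hπ0 : ∀ s a, 0 ≤ π s a) (hπ1 : ∀ s, ∑ a, π s a = 1)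
    (hT0 : ∀ s a s', 0 ≤ T s a s') (hT1 : ∀ s a, ∑ s', T s a s' = 1)
    {μ : S → ℝ} (hμ : ∀ s, 0 ≤ μ s) (f : S → A → ℝ) :
    ∑ s, ∑ a, occupancy T π μ γ s a * f s a =
      (1 - γ) * ∑' t, γ ^ t * policyExpect π (stateDist T π μ t) f := by
  have hsummable : ∀ s a, Summable fun t => γ ^ t * (stateDist T π μ t s * π s a * f s a) := by
    intro s a
    refine summable_pow_mul_of_abs_le hγ (M := (∑ s, μ s) * |f s a|) fun t => ?_
    have hμt := stateDist_nonneg hπ0 hT0 hμ t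
    have hμt_le : stateDist T π μ t s ≤ ∑ s, μ s :=
      (single_le_sum (fun s _ => hμt s) (mem_univ s)).trans_eq (sum_stateDist hπ1 hT1 μ t)
    have hπ_le : π s a ≤ 1 := (single_le_sum (fun a _ => hπ0 s a) (mem_univ a)).trans_eq (hπ1 s)
    rw [abs_mul, abs_mul, abs_of_nonneg (hμt s), abs_of_nonneg (hπ0 s a)]
    exact mul_le_mul_of_nonneg_right
      ((mul_le_of_le_one_right (hμt s) hπ_le).trans hμt_le) (abs_nonneg _)
  have hexpand : ∀ t, γ ^ t * policyExpect π (stateDist T π μ t) f =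
      ∑ s, ∑ a, γ ^ t * (stateDist T π μ t s * π s a * f s a) := fun t => by
    simp only [policyExpect, mul_sum]
  rw [tsum_congr hexpand, Summable.tsum_finsetSum fun s _ => summable_sum fun a _ => hsummable s a,
    mul_sum]
  refine sum_congr rfl fun s _ => ?_
  rw [Summable.tsum_finsetSum fun a _ => hsummable s a, mul_sum]
  refine sum_congr rfl fun a _ => ?_
  rw [occupancy, mul_assoc, ← tsum_mul_right]
  exact congrArg _ (tsum_congr fun t => by ring)

end Value

lemma abs_sum_sub_mul_le_tvDist [Fintype S] (P Q v : S → ℝ) {C : ℝ} (hv : ∀ s, |v s| ≤ C) :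
    |∑ s, (P s - Q s) * v s| ≤ 2 * C * tvDist P Q := by
  calc |∑ s, (P s - Q s) * v s| ≤ ∑ s, |P s - Q s| * C := by
        refine (abs_sum_le_sum_abs _ _).trans (sum_le_sum fun s _ => ?_)
        rw [abs_mul]
        exact mul_le_mul_of_nonneg_left (hv s) (abs_nonneg _)
    _ = 2 * C * tvDist P Q := by rw [← sum_mul, tvDist]; ring

theorem simulation_lemma_general [Fintype S] [Fintype A] [DecidableEq S]
    (T Tt : S → A → S → ℝ) (π : S → A → ℝ) (μ0 : S → ℝ) (r : S → A → ℝ)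
    (γ C : ℝ) (hγ0 : 0 ≤ γ) (hγ1 : γ < 1)
    (hμ0 : ∀ s, 0 ≤ μ0 s)
    (hπ0 : ∀ s a, 0 ≤ π s a) (hπ1 : ∀ s, ∑ a, π s a = 1)
    (hT0 : ∀ s a s', 0 ≤ T s a s') (hT1 : ∀ s a, ∑ s', T s a s' = 1)
    (hTt0 : ∀ s a s', 0 ≤ Tt s a s') (hTt1 : ∀ s a, ∑ s', Tt s a s' = 1)
    (hV : ∀ s : S, |value Tt π (dirac s) r γ| ≤ C) :
    |value T π μ0 r γ - value Tt π μ0 r γ|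
      ≤ (2 * C * γ / (1 - γ)) *
          ∑ s, ∑ a, occupancy T π μ0 γ s a * tvDist (T s a) (Tt s a) := by
  have hγ : |γ| < 1 := abs_lt.2 ⟨by linarith, hγ1⟩
  rw [value_eq_sum_mul_add_tsum_of_bellman hγ hπ0 hπ1 hT0 hT1 hμ0 r Tt _
      (value_dirac_eq_bellman hγ hπ0 hπ1 hTt0 hTt1 r),
    value_eq_sum_mul_value_dirac hγ hπ0 hπ1 hTt0 hTt1 μ0, add_sub_cancel_left]
  set tv : S → A → ℝ := fun s a => 2 * C * tvDist (T s a) (Tt s a)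
  have hrhs : 2 * C * γ / (1 - γ) * ∑ s, ∑ a, occupancy T π μ0 γ s a * tvDist (T s a) (Tt s a) =
      γ * ∑' t, γ ^ t * policyExpect π (stateDist T π μ0 t) tv := by
    have h := sum_occupancy_mul hγ hπ0 hπ1 hT0 hT1 hμ0 tv
    simp only [tv, mul_left_comm _ (2 * C), ← mul_sum] at h
    field_simp [(sub_pos.2 hγ1).ne']
    linear_combination γ * h
  rw [hrhs, abs_mul, abs_of_nonneg hγ0, ← Real.norm_eq_abs]
  gcongr
  refine tsum_of_norm_bounded
    (summable_pow_mul_policyExpect_stateDist hγ hπ0 hπ1 hT0 hT1 hμ0 tv).hasSum fun t => ?_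
  rw [Real.norm_eq_abs, abs_mul, abs_of_nonneg (pow_nonneg hγ0 _)]
  gcongr
  exact abs_policyExpect_le (stateDist_nonneg hπ0 hT0 hμ0 t) hπ0
    fun s a => abs_sum_sub_mul_le_tvDist _ _ _ hV

/-- Simulation lemma: if the value function under `T̃` is bounded by `C`, then
`|V_T^π - V_{T̃}^π| ≤ (2Cγ/(1-γ)) E_{(s,a)∼d_T^π}[TV(T(·|s,a), T̃(·|s,a))]`. -/
theorem simulation_lemma [Fintype S] [Fintype A] [DecidableEq S]
    (T Tt : S → A → S → ℝ) (π : S → A → ℝ) (μ0 : S → ℝ) (r : S → A → ℝ)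
    (γ C : ℝ) (hγ0 : 0 ≤ γ) (hγ1 : γ < 1)
    (hμ0 : ∀ s, 0 ≤ μ0 s) (hμ1 : ∑ s, μ0 s = 1)
    (hπ0 : ∀ s a, 0 ≤ π s a) (hπ1 : ∀ s, ∑ a, π s a = 1)
    (hT0 : ∀ s a s', 0 ≤ T s a s') (hT1 : ∀ s a, ∑ s', T s a s' = 1)
    (hTt0 : ∀ s a s', 0 ≤ Tt s a s') (hTt1 : ∀ s a, ∑ s', Tt s a s' = 1)
    (hV : ∀ s : S, |value Tt π (dirac s) r γ| ≤ C) :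
    |value T π μ0 r γ - value Tt π μ0 r γ|
      ≤ (2 * C * γ / (1 - γ)) *
          ∑ s, ∑ a, occupancy T π μ0 γ s a * tvDist (T s a) (Tt s a) :=
  simulation_lemma_general T Tt π μ0 r γ C hγ0 hγ1 hμ0 hπ0 hπ1 hT0 hT1 hTt0 hTt1 hV
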